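/- arXiv:2008.01417 — 3 statements merged into one kernel-verified Lean document; each statement's English description precedes it below -/
import Mathlib

section
/- Let m > 1, d ≥ 2, t, s, k be integers with gcd(d,t) = 1, 0 ≤ s ≤ m−1, d·s ≡ −t (mod m), and 0 ≤ k ≤ s. Then in the polynomial ring over ℚ with indeterminates a and q, the congruence (a q^t; q^d)_{s−k} · (q^d/a; q^d)_k ≡ (−a)^{s−2k} q^{s(ds−d+2t)/2 + (d−t)k} · (a q^t; q^d)_k · (q^d/a; q^d)_{s−k} holds modulo the m-th cyclotomic polynomial Φ_m(q) (after clearing denominators in a). -/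
/-!
Modulo `Φₘ(q)` we have `q ^ (t + d s) = 1`, so each factor of `(a q^t; q^d)_n` can be reflected:
`1 - a q^(t + d i) = -a q^(t + d i) (1 - q^(d (s - i)) / a)`. Hence for every `n ≤ s`
`(a q^t; q^d)_n (q^d/a; q^d)_(s-n) = (-a q^t)^n q^(d n(n-1)/2) (q^d/a; q^d)_s`,
and comparing `n = s - k` with `n = k` gives the congruence, the two exponents of `q` differing
by `k (t + d s)`. This is an identity in any commutative ring in which `a` and `q` are units with
`q ^ (t + d s) = 1`; it is transported to `ℚ(a)(q)` through Laurent polynomials in `q`, evaluated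
once in `ℚ(a)(q)` and once at the root of `Φₘ`.
-/

open Polynomial Finset

noncomputable def qPoch {F : Type*} [Field F] (x r : F) (k : ℕ) : F :=
  ∏ i ∈ Finset.range k, (1 - x * r ^ i)

noncomputable def qInt {F : Type*} [Field F] (q : F) (z : ℤ) : F :=
  (1 - q ^ z) / (1 - q)

/-- `x ≡ 0 (mod M)` for `x ∈ ℚ(a)(q)`, where `RatFunc ℚ` is the field `ℚ(a)` and `M ∈ ℚ(a)[q]`. -/
def ratCongr2 (M : Polynomial (RatFunc ℚ)) (x : RatFunc (RatFunc ℚ)) : Prop :=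
  ∃ f g : Polynomial (RatFunc ℚ), IsCoprime M g ∧
    x * algebraMap (Polynomial (RatFunc ℚ)) (RatFunc (RatFunc ℚ)) g =
      algebraMap (Polynomial (RatFunc ℚ)) (RatFunc (RatFunc ℚ)) M *
        algebraMap (Polynomial (RatFunc ℚ)) (RatFunc (RatFunc ℚ)) f

section qProd

variable {R S : Type*} [CommRing R] [CommRing S]

def qProd (x r : R) (n : ℕ) : R :=
  ∏ i ∈ range n, (1 - x * r ^ i)

@[simp]
theorem qProd_zero (x r : R) : qProd x r 0 = 1 := prod_range_zero _

theorem qProd_succ (x r : R) (n : ℕ) : qProd x r (n + 1) = qProd x r n * (1 - x * r ^ n) :=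
  prod_range_succ _ n

theorem map_qProd (f : R →+* S) (x r : R) (n : ℕ) : f (qProd x r n) = qProd (f x) (f r) n := by
  simp [qProd, map_prod]

theorem qProd_mul_qProd_sub {x r b : R} {s n : ℕ} (h : b * x * r ^ s = 1) (hn : n ≤ s) :
    qProd x r n * qProd (b * r) r (s - n) = (-x) ^ n * r ^ n.choose 2 * qProd (b * r) r s := by
  induction n with
  | zero => simp
  | succ n ih =>
    have hs : s - n = s - (n + 1) + 1 := by omega
    have hr : r ^ n * (r * r ^ (s - (n + 1))) = r ^ s := by
      rw [← pow_succ', ← pow_add]; congr 1; omega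
    have hfactor : 1 - x * r ^ n = -x * r ^ n * (1 - b * r * r ^ (s - (n + 1))) := by
      linear_combination (-(b * x)) * hr - h
    calc qProd x r (n + 1) * qProd (b * r) r (s - (n + 1))
        = -x * r ^ n * (qProd x r n * qProd (b * r) r (s - n)) := by
          rw [hs, qProd_succ, qProd_succ, hfactor]; ring
      _ = _ := by rw [ih (by omega), Nat.choose_succ_succ', Nat.choose_one_right]; ring

theorem qProd_mul_qProd_sub_symm {x r b : R} {s k : ℕ} (h : b * x * r ^ s = 1) (hk : k ≤ s) :
    (-x) ^ k * r ^ k.choose 2 * (qProd x r (s - k) * qProd (b * r) r k) =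
      (-x) ^ (s - k) * r ^ (s - k).choose 2 * (qProd x r k * qProd (b * r) r (s - k)) := by
  have hsk := qProd_mul_qProd_sub h (Nat.sub_le s k)
  rw [Nat.sub_sub_self hk] at hsk
  rw [hsk, qProd_mul_qProd_sub h hk]
  ring

end qProd

theorem two_mul_choose_two (n : ℕ) : 2 * (n.choose 2 : ℤ) = n * (n - 1) := by
  have h := Nat.cast_choose_two ℚ n
  qify
  rw [h]
  ring

theorem reflection_exponent_eq (t : ℤ) (d s k : ℕ) (hk : k ≤ s) :
    (s : ℤ) * ((d : ℤ) * s - d + 2 * t) / 2 + ((d : ℤ) - t) * k =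
      t * (s - k : ℕ) + d * (s - k).choose 2 - t * k - d * k.choose 2 + k * (t + d * s) := by
  have hs : (s : ℤ) * ((d : ℤ) * s - d + 2 * t) = 2 * (d * s.choose 2 + t * s) := by
    linear_combination (-(d : ℤ)) * two_mul_choose_two s
  rw [hs, Int.mul_ediv_cancel_left _ two_ne_zero]
  have hsk := two_mul_choose_two (s - k)
  have hk2 := two_mul_choose_two k
  have hs2 := two_mul_choose_two s
  push_cast [Nat.cast_sub hk] at hsk ⊢
  apply mul_left_cancel₀ (two_ne_zero' ℤ)
  linear_combination (d : ℤ) * (hs2 - hsk + hk2)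

section Reflection

variable {R S : Type*} [CommRing R] [CommRing S]

def reflectionDefect (a q : Rˣ) (t : ℤ) (d s k : ℕ) : R :=
  qProd ↑(a * q ^ t) ↑(q ^ (d : ℤ)) (s - k) * qProd ↑(a⁻¹ * q ^ (d : ℤ)) ↑(q ^ (d : ℤ)) k -
    ↑((-a) ^ ((s : ℤ) - 2 * k) *
        q ^ ((s : ℤ) * ((d : ℤ) * s - d + 2 * t) / 2 + ((d : ℤ) - t) * k)) *
      qProd ↑(a * q ^ t) ↑(q ^ (d : ℤ)) k *
        qProd ↑(a⁻¹ * q ^ (d : ℤ)) ↑(q ^ (d : ℤ)) (s - k)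

theorem map_reflectionDefect (f : R →+* S) (a q : Rˣ) (t : ℤ) (d s k : ℕ) :
    f (reflectionDefect a q t d s k) =
      reflectionDefect (Units.map (f : R →* S) a) (Units.map (f : R →* S) q) t d s k := by
  have hf : ∀ u : Rˣ, f u = ↑(Units.map (f : R →* S) u) := fun _ ↦ rfl
  simp only [reflectionDefect, map_sub, map_mul, map_qProd, hf, map_zpow, map_inv, Units.map_neg]

theorem reflectionDefect_eq_zero {a q : Rˣ} {t : ℤ} {d s k : ℕ} (hq : q ^ (t + d * s) = 1)
    (hk : k ≤ s) : reflectionDefect a q t d s k = 0 := by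
  set x : R := ↑(a * q ^ t)
  set r : R := ↑(q ^ (d : ℤ))
  have hx : (a⁻¹ : Rˣ) * x * r ^ s = 1 := by
    rw [← Units.val_pow_eq_pow_val, ← Units.val_mul, ← Units.val_mul, ← zpow_natCast, ← zpow_mul,
      inv_mul_cancel_left, ← zpow_add, hq, Units.val_one]
  set U : ℕ → Rˣ := fun n ↦ (-a) ^ (n : ℤ) * q ^ (t * n + d * n.choose 2)
  have hU : ∀ n, (U n : R) = (-x) ^ n * r ^ n.choose 2 := by
    intro n
    simp only [U, x, r, zpow_add, zpow_mul, zpow_natCast, Units.val_mul, Units.val_pow_eq_pow_val,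
      Units.val_neg]
    ring
  have hW : U k * ((-a) ^ ((s : ℤ) - 2 * k) *
      q ^ ((s : ℤ) * ((d : ℤ) * s - d + 2 * t) / 2 + ((d : ℤ) - t) * k)) = U (s - k) := by
    rw [reflection_exponent_eq t d s k hk, zpow_add, mul_comm (k : ℤ), zpow_mul, hq, one_zpow,
      mul_one, mul_mul_mul_comm, ← zpow_add, ← zpow_add]
    congr 2 <;> push_cast [Nat.cast_sub hk] <;> ring
  have hsymm := qProd_mul_qProd_sub_symm hx hk
  rw [← hU, ← hU, ← hW, Units.val_mul (U k)] at hsymm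
  apply (U k).isUnit.mul_right_eq_zero.mp
  rw [reflectionDefect, Units.val_mul (a⁻¹), mul_sub, hsymm]
  ring

theorem reflectionDefect_mk0 {F : Type*} [Field F] {a q : F} (ha : a ≠ 0) (hq : q ≠ 0) (t : ℤ)
    (d s k : ℕ) :
    reflectionDefect (Units.mk0 a ha) (Units.mk0 q hq) t d s k =
      qPoch (a * q ^ t) (q ^ (d : ℤ)) (s - k) * qPoch (q ^ (d : ℤ) / a) (q ^ (d : ℤ)) k -
        (-a) ^ ((s : ℤ) - 2 * k) *
          q ^ ((s : ℤ) * ((d : ℤ) * s - d + 2 * t) / 2 + ((d : ℤ) - t) * k) *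
          qPoch (a * q ^ t) (q ^ (d : ℤ)) k * qPoch (q ^ (d : ℤ) / a) (q ^ (d : ℤ)) (s - k) := by
  simp [reflectionDefect, qPoch, qProd, div_eq_inv_mul, Units.val_zpow_eq_zpow_val]

end Reflection

section Transfer

variable {K : Type*} [Field K]

theorem isCoprime_cyclotomic_X (m : ℕ) : IsCoprime (cyclotomic m K) X := by
  rcases m.eq_zero_or_pos with rfl | hm
  · simpa using isCoprime_one_left
  refine (irreducible_X.coprime_iff_not_dvd.mpr fun hX ↦ ?_).symm
  have h := X_dvd_iff.mp (hX.trans (cyclotomic.dvd_X_pow_sub_one m K))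
  simp [hm.ne] at h

theorem AdjoinRoot.isUnit_root_of_isCoprime_X {M : K[X]} (hM : IsCoprime M X) :
    IsUnit (AdjoinRoot.root M) := by
  obtain ⟨u, v, h⟩ := hM
  refine .of_mul_eq_one (AdjoinRoot.mk M v) ?_
  simpa [mul_comm] using congrArg (AdjoinRoot.mk M) h

theorem AdjoinRoot.root_cyclotomic_pow (m : ℕ) : AdjoinRoot.root (cyclotomic m K) ^ m = 1 := by
  simpa [sub_eq_zero] using AdjoinRoot.mk_eq_zero.mpr (cyclotomic.dvd_X_pow_sub_one m K)

theorem ratCongr2_eval₂_of_eval₂_eq_zero {M : (RatFunc ℚ)[X]} (hM : IsCoprime M X)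
    (ζ : (AdjoinRoot M)ˣ) (hζ : (ζ : AdjoinRoot M) = AdjoinRoot.root M)
    (q : (RatFunc (RatFunc ℚ))ˣ) (hq : (q : RatFunc (RatFunc ℚ)) = RatFunc.X)
    {D : LaurentPolynomial (RatFunc ℚ)}
    (hD : LaurentPolynomial.eval₂ (AdjoinRoot.of M) ζ D = 0) :
    ratCongr2 M (LaurentPolynomial.eval₂ (algebraMap _ _) q D) := by
  obtain ⟨n, f, hf⟩ := LaurentPolynomial.exists_T_pow D
  have hMf : M ∣ f := by
    rw [← AdjoinRoot.mk_eq_zero, ← AdjoinRoot.aeval_eq, aeval_def, AdjoinRoot.algebraMap_eq, ← hζ,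
      ← LaurentPolynomial.eval₂_toLaurent, hf, map_mul, hD, zero_mul]
  obtain ⟨g, rfl⟩ := hMf
  have hψ : ∀ p : (RatFunc ℚ)[X], algebraMap _ (RatFunc (RatFunc ℚ)) p =
      Polynomial.eval₂ (algebraMap _ _) (q : RatFunc (RatFunc ℚ)) p := by
    intro p
    rw [hq, ← RatFunc.algebraMap_X]
    exact (eval₂_algebraMap_X p (IsScalarTower.toAlgHom (RatFunc ℚ) _ _)).symm
  refine ⟨g, X ^ n, hM.pow_right, ?_⟩
  rw [← map_mul, hψ, hψ, ← LaurentPolynomial.eval₂_toLaurent,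
    ← LaurentPolynomial.eval₂_toLaurent, hf, map_mul]
  simp

end Transfer

theorem stmt0_general (m : ℕ) (d : ℕ) (t : ℤ)
    (s k : ℕ) (hk : k ≤ s)
    (hmod : (d : ℤ) * s ≡ -t [ZMOD (m : ℤ)]) :
    let q : RatFunc (RatFunc ℚ) := RatFunc.X
    let a : RatFunc (RatFunc ℚ) := RatFunc.C RatFunc.X
    ratCongr2 (cyclotomic m (RatFunc ℚ))
      (qPoch (a * q ^ t) (q ^ (d : ℤ)) (s - k) * qPoch (q ^ (d : ℤ) / a) (q ^ (d : ℤ)) k -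
        (-a) ^ ((s : ℤ) - 2 * k) *
          q ^ ((s : ℤ) * ((d : ℤ) * s - d + 2 * t) / 2 + ((d : ℤ) - t) * k) *
          qPoch (a * q ^ t) (q ^ (d : ℤ)) k * qPoch (q ^ (d : ℤ) / a) (q ^ (d : ℤ)) (s - k)) := by
  intro q a
  have hΦ := isCoprime_cyclotomic_X (K := RatFunc ℚ) m
  set ζ := (AdjoinRoot.isUnit_root_of_isCoprime_X hΦ).unit
  have hζ : ζ ^ (t + d * s) = 1 := by
    have hζm : ζ ^ m = 1 := Units.ext (by simpa [ζ] using AdjoinRoot.root_cyclotomic_pow m)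
    have hdvd : (m : ℤ) ∣ t + d * s := by simpa [add_comm] using hmod.symm.dvd
    exact orderOf_dvd_iff_zpow_eq_one.mp
      ((Int.natCast_dvd_natCast.mpr (orderOf_dvd_of_pow_eq_one hζm)).trans hdvd)
  have ha : a ≠ 0 := by simp [a, RatFunc.X_ne_zero]
  have hq : q ≠ 0 := RatFunc.X_ne_zero
  set α := Units.map (LaurentPolynomial.C : RatFunc ℚ →+* _).toMonoidHom
    (Units.mk0 _ RatFunc.X_ne_zero)
  set τ := (LaurentPolynomial.isUnit_T (R := RatFunc ℚ) 1).unit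
  have hQ : LaurentPolynomial.eval₂ (AdjoinRoot.of _) ζ (reflectionDefect α τ t d s k) = 0 := by
    rw [map_reflectionDefect]
    convert reflectionDefect_eq_zero hζ hk
    ext
    simp [τ]
  have hL : LaurentPolynomial.eval₂ (algebraMap _ _) (Units.mk0 q hq)
      (reflectionDefect α τ t d s k) = reflectionDefect (Units.mk0 a ha) (Units.mk0 q hq) t d s k := by
    rw [map_reflectionDefect]
    congr 1 <;> ext <;> simp [α, τ, a, RatFunc.algebraMap_eq_C]
  rw [← reflectionDefect_mk0 ha hq, ← hL]
  exact ratCongr2_eval₂_of_eval₂_eq_zero hΦ ζ (IsUnit.unit_spec _) _ rfl hQ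

/-- Lemma 1 of the paper: for `0 ≤ k ≤ s ≤ m-1` with `ds ≡ -t (mod m)`,
`(aq^t;q^d)_{s-k} (q^d/a;q^d)_k ≡ (-a)^{s-2k} q^{s(ds-d+2t)/2+(d-t)k} (aq^t;q^d)_k (q^d/a;q^d)_{s-k}`
modulo `Φₘ(q)` (after clearing denominators in `a`). -/
theorem stmt0 (m : ℕ) (hm : 1 < m) (d : ℕ) (hd : 2 ≤ d) (t : ℤ)
    (hdt : Int.gcd (d : ℤ) t = 1) (s k : ℕ) (hs : s ≤ m - 1) (hk : k ≤ s)
    (hmod : (d : ℤ) * s ≡ -t [ZMOD (m : ℤ)]) :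
    let q : RatFunc (RatFunc ℚ) := RatFunc.X
    let a : RatFunc (RatFunc ℚ) := RatFunc.C RatFunc.X
    ratCongr2 (cyclotomic m (RatFunc ℚ))
      (qPoch (a * q ^ t) (q ^ (d : ℤ)) (s - k) * qPoch (q ^ (d : ℤ) / a) (q ^ (d : ℤ)) k -
        (-a) ^ ((s : ℤ) - 2 * k) *
          q ^ ((s : ℤ) * ((d : ℤ) * s - d + 2 * t) / 2 + ((d : ℤ) - t) * k) *
          qPoch (a * q ^ t) (q ^ (d : ℤ)) k * qPoch (q ^ (d : ℤ) / a) (q ^ (d : ℤ)) (s - k)) :=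
  stmt0_general m d t s k hk hmod
end

section
/- Let m > 1, d ≥ 2, t be integers with gcd(d,m) = 1 and gcd(d,t) = 1. Then the sum over k from 0 to m−1 of [2dk+t] · (q^t;q^d)_k^2 (aq^t;q^d)_k (q^t/a;q^d)_k / ((q^d;q^d)_k^2 (aq^d;q^d)_k (q^d/a;q^d)_k) · q^{(d−2t)k} is congruent to 0 modulo Φ_m(q), as an identity of rational functions in a and q. -/
open Polynomial Finset

theorem mul_pow_ne_one_of_pow_eq_one {M : Type*} [CommMonoid M] {α ζ : M} {m : ℕ}
    (hζ : ζ ^ m = 1) (hα : α ^ m ≠ 1) : (α * ζ) ^ m ≠ 1 := by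
  rwa [mul_pow, hζ, mul_one]

theorem div_pow_ne_one_of_pow_eq_one {G : Type*} [DivisionCommMonoid G] {α ζ : G} {m : ℕ}
    (hζ : ζ ^ m = 1) (hα : α ^ m ≠ 1) : (ζ / α) ^ m ≠ 1 := by
  rwa [div_pow, hζ, one_div, inv_ne_one]

theorem zpow_eq_zpow_of_eq_add_mul {G₀ : Type*} [GroupWithZero G₀] {ρ : G₀} (hρ : ρ ≠ 0)
    {N a b c : ℤ} (hN : ρ ^ N = 1) (h : a = b + N * c) : ρ ^ a = ρ ^ b := by
  rw [h, zpow_add₀ hρ, zpow_mul, hN, one_zpow, mul_one]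

theorem zpow_mul_zpow_natCast_pow {G₀ : Type*} [GroupWithZero G₀] {q : G₀} (hq : q ≠ 0)
    {d n : ℕ} {t : ℤ} : q ^ t * (q ^ (d : ℤ)) ^ n = q ^ ((d : ℤ) * n + t) := by
  rw [← zpow_natCast, ← zpow_mul, ← zpow_add₀ hq, add_comm]

theorem Int.natCast_choose_two_mul_two (n : ℕ) : (n.choose 2 : ℤ) * 2 = n * (n - 1) := by
  induction n with
  | zero => simp
  | succ n ih =>
    rw [Nat.choose_succ_succ', Nat.choose_one_right]
    push_cast
    linear_combination ih

theorem sum_range_succ_eq_zero_of_reflect_eq_neg {M : Type*} [AddCommGroup M]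
    [IsAddTorsionFree M] {f : ℕ → M} {n : ℕ} (h : ∀ k ≤ n, f (n - k) = -f k) :
    ∑ k ∈ range (n + 1), f k = 0 := by
  refine self_eq_neg.1 ?_
  conv_lhs => rw [← sum_range_reflect]
  rw [← sum_neg_distrib]
  exact sum_congr rfl fun k hk => by
    rw [Nat.add_sub_cancel, h k (Nat.lt_succ_iff.1 (mem_range.1 hk))]

theorem exists_lt_dvd_mul_add {d m : ℕ} [NeZero m] (hdm : d.Coprime m) (t : ℤ) :
    ∃ n < m, (m : ℤ) ∣ d * n + t := by
  have hd : IsUnit (d : ZMod m) := (ZMod.isUnit_iff_coprime d m).2 hdm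
  refine ⟨(-t * (d : ZMod m)⁻¹ : ZMod m).val, ZMod.val_lt _, ?_⟩
  rw [← ZMod.intCast_zmod_eq_zero_iff_dvd]
  push_cast
  rw [ZMod.natCast_val, ZMod.cast_id, mul_left_comm, ZMod.mul_inv_of_unit _ hd]
  ring

section QPochhammer

variable {F : Type*} [Field F]

theorem qPoch_add (x r : F) (a b : ℕ) :
    qPoch x r (a + b) = qPoch x r a * qPoch (x * r ^ a) r b := by
  simp only [qPoch, prod_range_add, pow_add, mul_assoc]

theorem qPoch_eq_zero_of_lt {x r : F} {n k : ℕ} (h : x * r ^ n = 1) (hnk : n < k) :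
    qPoch x r k = 0 :=
  prod_eq_zero (mem_range.2 hnk) (sub_eq_zero.2 h.symm)

theorem qPoch_ne_zero {x r : F} {k : ℕ} (h : ∀ i < k, x * r ^ i ≠ 1) : qPoch x r k ≠ 0 :=
  prod_ne_zero_iff.2 fun i hi => sub_ne_zero.2 (h i (mem_range.1 hi)).symm

theorem qPoch_ne_zero_of_mul_pow_eq_one {x p : F} {m j n : ℕ} (hp : IsPrimitiveRoot p m)
    (hx : x * p ^ j = 1) (hjm : j < m) (hnj : n ≤ j) : qPoch x p n ≠ 0 :=
  qPoch_ne_zero fun i hi h => hp.pow_ne_one_of_pos_of_lt (l := j - i) (by omega) (by omega) <| by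
    rw [← hx, ← one_mul (p ^ (j - i)), ← h, mul_assoc, ← pow_add, Nat.add_sub_cancel' (by omega)]

theorem qPoch_self_ne_zero {p : F} {m k : ℕ} (hp : IsPrimitiveRoot p m) (hk : k < m) :
    qPoch p p k ≠ 0 :=
  qPoch_ne_zero_of_mul_pow_eq_one hp (j := m - 1)
    (by rw [← pow_succ', Nat.sub_add_cancel (by omega), hp.pow_eq_one]) (by omega) (by omega)

theorem qPoch_ne_zero_of_pow_ne_one {x r : F} {m : ℕ} (hr : r ^ m = 1) (hx : x ^ m ≠ 1)
    (k : ℕ) : qPoch x r k ≠ 0 :=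
  qPoch_ne_zero fun i _ h => hx <| by
    rw [← one_pow m, ← h, mul_pow, ← pow_mul, mul_comm i, pow_mul, hr, one_pow, mul_one]

theorem qPoch_reverse {x y r : F} (hr : r ≠ 0) {k : ℕ} (hxy : x * y = r ^ (1 - k : ℤ)) :
    qPoch x r k = (-x) ^ k * r ^ k.choose 2 * qPoch y r k := by
  have hfactor : ∀ i ∈ range k, 1 - x * r ^ i = -x * r ^ i * (1 - y * r ^ (k - 1 - i)) := by
    intro i hi
    have hik := mem_range.1 hi
    have : x * r ^ i * (y * r ^ (k - 1 - i)) = 1 := by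
      rw [mul_mul_mul_comm, hxy, ← zpow_natCast, ← zpow_natCast, ← zpow_add₀ hr, ← zpow_add₀ hr,
        show (1 - k + (i + (k - 1 - i : ℕ)) : ℤ) = 0 by omega, zpow_zero]
    linear_combination -this
  have hchoose : ∑ i ∈ range k, i = k.choose 2 := by
    rw [Nat.choose_two_right, ← sum_range_id_mul_two, Nat.mul_div_cancel _ two_pos]
  rw [qPoch, prod_congr rfl hfactor, prod_mul_distrib, prod_mul_distrib, prod_const, card_range,
    prod_pow_eq_pow_sum, hchoose, qPoch, ← prod_range_reflect (fun i => 1 - y * r ^ i) k]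

theorem qPoch_reflect {x y r : F} (hr : r ≠ 0) {n k : ℕ} (hxy : x * y = r ^ (1 - n : ℤ))
    (hk : k ≤ n) :
    qPoch x r n =
      qPoch x r (n - k) * ((-(x * r ^ (n - k))) ^ k * r ^ k.choose 2) * qPoch y r k := by
  have hshift : x * r ^ (n - k) * y = r ^ (1 - k : ℤ) := by
    rw [mul_right_comm, hxy, ← zpow_natCast, ← zpow_add₀ hr]
    congr 1
    omega
  conv_lhs => rw [← Nat.sub_add_cancel hk]
  rw [qPoch_add, qPoch_reverse hr hshift]
  ring

theorem qPoch_div_qPoch_sub {x y r : F} (hr : r ≠ 0) {n k : ℕ} (hxy : x * y = r ^ (1 - n : ℤ))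
    (hk : k ≤ n) (hx : qPoch x r n ≠ 0) (hy : qPoch y r n ≠ 0) :
    qPoch x r (n - k) / qPoch y r (n - k) =
      (-x) ^ n * r ^ n.choose 2 * (y / x) ^ k * (qPoch x r k / qPoch y r k) := by
  have hx0 : x ≠ 0 := left_ne_zero_of_mul (hxy ▸ zpow_ne_zero _ hr)
  have hA := qPoch_reflect hr hxy hk
  have hB := qPoch_reflect hr (y := x) (by rwa [mul_comm]) hk
  have hAB := qPoch_reverse hr hxy
  have hBk : qPoch y r k ≠ 0 := right_ne_zero_of_mul (hA ▸ hx)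
  have hBnk : qPoch y r (n - k) ≠ 0 := left_ne_zero_of_mul (left_ne_zero_of_mul (hB ▸ hy))
  have hc : (-r ^ (n - k)) ^ k * r ^ k.choose 2 ≠ 0 :=
    mul_ne_zero (pow_ne_zero _ (neg_ne_zero.2 (pow_ne_zero _ hr))) (pow_ne_zero _ hr)
  rw [div_pow]
  field_simp
  apply mul_right_cancel₀ hc
  linear_combination -hA + hAB + ((-x) ^ n * r ^ n.choose 2) * hB

theorem qInt_neg {q : F} (hq : q ≠ 0) (z : ℤ) : qInt q (-z) = -q ^ (-z) * qInt q z := by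
  rw [qInt, qInt, zpow_neg]
  field_simp
  ring

end QPochhammer

section WellPoised

variable {F : Type*} [Field F]

noncomputable def wellPoisedTerm (q a : F) (d : ℕ) (t : ℤ) (k : ℕ) : F :=
  qInt q (2 * (d : ℤ) * k + t) *
    (qPoch (q ^ t) (q ^ (d : ℤ)) k ^ 2 * qPoch (a * q ^ t) (q ^ (d : ℤ)) k *
      qPoch (q ^ t / a) (q ^ (d : ℤ)) k) /
    (qPoch (q ^ (d : ℤ)) (q ^ (d : ℤ)) k ^ 2 * qPoch (a * q ^ (d : ℤ)) (q ^ (d : ℤ)) k *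
      qPoch (q ^ (d : ℤ) / a) (q ^ (d : ℤ)) k) *
    q ^ (((d : ℤ) - 2 * t) * k)

theorem wellPoisedTerm_eq (q a : F) (d : ℕ) (t : ℤ) (k : ℕ) :
    wellPoisedTerm q a d t k =
      qInt q (2 * d * k + t) * q ^ ((d - 2 * t) * k) *
        ((qPoch (q ^ t) (q ^ (d : ℤ)) k / qPoch (q ^ (d : ℤ)) (q ^ (d : ℤ)) k) ^ 2 *
          (qPoch (a * q ^ t) (q ^ (d : ℤ)) k / qPoch (q ^ (d : ℤ) / a) (q ^ (d : ℤ)) k) *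
          (qPoch (q ^ t / a) (q ^ (d : ℤ)) k / qPoch (a * q ^ (d : ℤ)) (q ^ (d : ℤ)) k)) := by
  rw [wellPoisedTerm]
  ring

theorem wellPoisedTerm_eq_zero_of_lt {q : F} (hq : q ≠ 0) (a : F) {d n k : ℕ} {t : ℤ}
    (h : q ^ ((d : ℤ) * n + t) = 1) (hnk : n < k) : wellPoisedTerm q a d t k = 0 := by
  rw [wellPoisedTerm, qPoch_eq_zero_of_lt ((zpow_mul_zpow_natCast_pow hq).trans h) hnk]
  simp

theorem wellPoisedTerm_reflect_factors {X P α : F} (hX : X ≠ 0) (hα : α ≠ 0) (n c k : ℕ) :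
    ((-X) ^ n * P ^ c) ^ 2 * ((-(α * X)) ^ n * P ^ c) * ((-(X / α)) ^ n * P ^ c) *
        ((P / X) ^ k) ^ 2 * (P / α / (α * X)) ^ k * (α * P / (X / α)) ^ k =
      (X ^ n * P ^ c) ^ 4 * (P / X) ^ (4 * k) := by
  have hsq : ((-X) ^ n) ^ 2 = (X ^ 2) ^ n := by rw [← pow_mul, mul_comm, pow_mul, neg_sq]
  have hXα : -(α * X) * -(X / α) = X ^ 2 := by field_simp
  have hPα : P / α / (α * X) * (α * P / (X / α)) = (P / X) ^ 2 := by field_simp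
  calc _ = ((-X) ^ n) ^ 2 * ((-(α * X)) ^ n * (-(X / α)) ^ n) * (P ^ c) ^ 4 * ((P / X) ^ k) ^ 2 *
          ((P / α / (α * X)) ^ k * (α * P / (X / α)) ^ k) := by ring
    _ = _ := by
      rw [hsq, ← mul_pow (-(α * X)), ← mul_pow (P / α / (α * X)), hXα, hPα]
      ring

theorem wellPoisedTerm_reflect_scalar {ρ α : F} {d n k : ℕ} {t : ℤ} (hρ : ρ ≠ 0) (hα : α ≠ 0)
    (hn : ρ ^ ((d : ℤ) * n + t) = 1) (hk : k ≤ n) :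
    qInt ρ (2 * d * ((n - k : ℕ) : ℤ) + t) * ρ ^ ((d - 2 * t) * ((n - k : ℕ) : ℤ)) *
        (((-ρ ^ t) ^ n * (ρ ^ (d : ℤ)) ^ n.choose 2) ^ 2 *
          ((-(α * ρ ^ t)) ^ n * (ρ ^ (d : ℤ)) ^ n.choose 2) *
          ((-(ρ ^ t / α)) ^ n * (ρ ^ (d : ℤ)) ^ n.choose 2) *
          ((ρ ^ (d : ℤ) / ρ ^ t) ^ k) ^ 2 * (ρ ^ (d : ℤ) / α / (α * ρ ^ t)) ^ k *
          (α * ρ ^ (d : ℤ) / (ρ ^ t / α)) ^ k) =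
      -(qInt ρ (2 * d * k + t) * ρ ^ ((d - 2 * t) * k)) := by
  have hpow : ρ ^ (-(2 * d * k + t)) * ρ ^ ((d - 2 * t) * ((n - k : ℕ) : ℤ)) *
        ((ρ ^ t) ^ n * (ρ ^ (d : ℤ)) ^ n.choose 2) ^ 4 * (ρ ^ (d : ℤ) / ρ ^ t) ^ (4 * k) =
      ρ ^ ((d - 2 * t) * k) := by
    simp only [div_eq_mul_inv, ← zpow_neg, ← zpow_natCast, ← zpow_mul, ← zpow_add₀ hρ]
    apply zpow_eq_zpow_of_eq_add_mul hρ hn (c := 2 * n - 1)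
    push_cast [hk]
    linear_combination (2 * d) * Int.natCast_choose_two_mul_two n
  have hqInt : qInt ρ (2 * d * ((n - k : ℕ) : ℤ) + t) = qInt ρ (-(2 * d * k + t)) := by
    rw [qInt, qInt, zpow_eq_zpow_of_eq_add_mul hρ hn (c := 2)]
    push_cast [hk]
    ring
  rw [mul_assoc, wellPoisedTerm_reflect_factors (zpow_ne_zero _ hρ) hα, hqInt, qInt_neg hρ, ← hpow]
  ring

theorem wellPoisedTerm_reflect {ρ α : F} {m d n k : ℕ} {t : ℤ} (hρ : IsPrimitiveRoot ρ m)
    (hdm : d.Coprime m) (hα : α ≠ 0) (hαm : α ^ m ≠ 1) (hnm : n < m)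
    (hn : ρ ^ ((d : ℤ) * n + t) = 1) (hk : k ≤ n) :
    wellPoisedTerm ρ α d t (n - k) = -wellPoisedTerm ρ α d t k := by
  have hρ0 : ρ ≠ 0 := hρ.ne_zero (by omega)
  set p := ρ ^ (d : ℤ) with hp_def
  set X := ρ ^ t with hX_def
  have hp : IsPrimitiveRoot p m := by
    rw [hp_def, zpow_natCast]
    exact hρ.pow_of_coprime d hdm
  have hp0 : p ≠ 0 := zpow_ne_zero _ hρ0
  have hXp : X * p ^ n = 1 := by rw [zpow_mul_zpow_natCast_pow hρ0, hn]
  have hXm : X ^ m = 1 := by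
    rw [hX_def, ← zpow_natCast, ← zpow_mul, mul_comm, zpow_mul, zpow_natCast, hρ.pow_eq_one,
      one_zpow]
  -- `x ↦ p ^ (1 - n) / x` swaps the parameters `X, αX, X/α` of the numerator with
  -- `p, p/α, αp` of the denominator.
  have hc : X * p = p ^ (1 - n : ℤ) := by
    rw [zpow_sub₀ hp0, zpow_one, zpow_natCast, eq_div_iff (pow_ne_zero _ hp0)]
    linear_combination p * hXp
  have hc₂ : α * X * (p / α) = p ^ (1 - n : ℤ) := by rw [← hc]; field_simp
  have hc₃ : X / α * (α * p) = p ^ (1 - n : ℤ) := by rw [← hc]; field_simp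
  have hpm : p ^ m = 1 := hp.pow_eq_one
  rw [wellPoisedTerm_eq, wellPoisedTerm_eq,
    qPoch_div_qPoch_sub hp0 hc hk (qPoch_ne_zero_of_mul_pow_eq_one hp hXp hnm le_rfl)
      (qPoch_self_ne_zero hp hnm),
    qPoch_div_qPoch_sub hp0 hc₂ hk
      (qPoch_ne_zero_of_pow_ne_one hpm (mul_pow_ne_one_of_pow_eq_one hXm hαm) n)
      (qPoch_ne_zero_of_pow_ne_one hpm (div_pow_ne_one_of_pow_eq_one hpm hαm) n),
    qPoch_div_qPoch_sub hp0 hc₃ hk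
      (qPoch_ne_zero_of_pow_ne_one hpm (div_pow_ne_one_of_pow_eq_one hXm hαm) n)
      (qPoch_ne_zero_of_pow_ne_one hpm (mul_pow_ne_one_of_pow_eq_one hpm hαm) n)]
  linear_combination (qPoch X p k / qPoch p p k) ^ 2 * (qPoch (α * X) p k / qPoch (p / α) p k) *
    (qPoch (X / α) p k / qPoch (α * p) p k) * wellPoisedTerm_reflect_scalar hρ0 hα hn hk

theorem sum_wellPoisedTerm_eq_zero [CharZero F] {ρ α : F} {m d : ℕ} [NeZero m]
    (hρ : IsPrimitiveRoot ρ m) (hdm : d.Coprime m) (t : ℤ) (hα : α ≠ 0) (hαm : α ^ m ≠ 1) :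
    ∑ k ∈ range m, wellPoisedTerm ρ α d t k = 0 := by
  obtain ⟨n, hnm, hdvd⟩ := exists_lt_dvd_mul_add hdm t
  have hn : ρ ^ ((d : ℤ) * n + t) = 1 := (hρ.zpow_eq_one_iff_dvd _).2 hdvd
  rw [← sum_range_add_sum_Ico _ (show n + 1 ≤ m by omega),
    sum_range_succ_eq_zero_of_reflect_eq_neg fun k hk =>
      wellPoisedTerm_reflect hρ hdm hα hαm hnm hn hk, zero_add]
  exact sum_eq_zero fun k hk =>
    wellPoisedTerm_eq_zero_of_lt (hρ.ne_zero (NeZero.ne m)) α hn (mem_Ico.1 hk).1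

end WellPoised

theorem Polynomial.Separable.dvd_of_forall_aeval_eq_zero {K Ω : Type*} [Field K] [Field Ω]
    [Algebra K Ω] [IsAlgClosed Ω] {M f : K[X]} (hM : M.Separable)
    (h : ∀ ρ : Ω, aeval ρ M = 0 → aeval ρ f = 0) : M ∣ f := by
  rcases eq_or_ne f 0 with rfl | hf
  · exact dvd_zero M
  rw [← map_dvd_map' (algebraMap K Ω)]
  refine (IsAlgClosed.splits _).dvd_of_roots_le_roots (map_ne_zero hM.ne_zero) ?_
  rw [Multiset.le_iff_subset (nodup_roots hM.map)]
  intro ρ hρ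
  rw [mem_roots (map_ne_zero hf), IsRoot, eval_map_algebraMap]
  rw [mem_roots (map_ne_zero hM.ne_zero), IsRoot, eval_map_algebraMap] at hρ
  exact h ρ hρ

section ValuesAtRoots

variable {K Ω : Type*} [Field K] [Field Ω] [Algebra K Ω]

def HasValuesAtRoots (M : K[X]) (x : RatFunc K) (v : Ω → Ω) : Prop :=
  ∃ f g : K[X], IsCoprime M g ∧
    x * algebraMap K[X] (RatFunc K) g = algebraMap K[X] (RatFunc K) f ∧
    ∀ ρ : Ω, aeval ρ M = 0 → aeval ρ f = v ρ * aeval ρ g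

namespace HasValuesAtRoots

variable {M : K[X]} {x y : RatFunc K} {v w : Ω → Ω}

theorem const (c : K) : HasValuesAtRoots M (RatFunc.C c) (fun _ : Ω => algebraMap K Ω c) :=
  ⟨C c, 1, isCoprime_one_right, by rw [map_one, mul_one, RatFunc.algebraMap_C],
    fun _ _ => by rw [aeval_C, map_one, mul_one]⟩

theorem zero : HasValuesAtRoots M 0 (fun _ : Ω => 0) := by
  simpa using const (M := M) (Ω := Ω) 0

theorem one : HasValuesAtRoots M 1 (fun _ : Ω => 1) := by
  simpa using const (M := M) (Ω := Ω) 1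

theorem X : HasValuesAtRoots M RatFunc.X (fun ρ : Ω => ρ) :=
  ⟨Polynomial.X, 1, isCoprime_one_right, by rw [map_one, mul_one, RatFunc.algebraMap_X],
    fun _ _ => by rw [aeval_X, map_one, mul_one]⟩

theorem add (hx : HasValuesAtRoots M x v) (hy : HasValuesAtRoots M y w) :
    HasValuesAtRoots M (x + y) (fun ρ => v ρ + w ρ) := by
  obtain ⟨f, g, hg, hxg, hfg⟩ := hx
  obtain ⟨f', g', hg', hyg, hfg'⟩ := hy
  refine ⟨f * g' + f' * g, g * g', hg.mul_right hg', ?_, fun ρ hρ => ?_⟩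
  · simp only [map_add, map_mul]
    linear_combination algebraMap K[X] (RatFunc K) g' * hxg + algebraMap K[X] (RatFunc K) g * hyg
  · simp only [map_add, map_mul, hfg ρ hρ, hfg' ρ hρ]
    ring

theorem sub (hx : HasValuesAtRoots M x v) (hy : HasValuesAtRoots M y w) :
    HasValuesAtRoots M (x - y) (fun ρ => v ρ - w ρ) := by
  obtain ⟨f, g, hg, hxg, hfg⟩ := hx
  obtain ⟨f', g', hg', hyg, hfg'⟩ := hy
  refine ⟨f * g' - f' * g, g * g', hg.mul_right hg', ?_, fun ρ hρ => ?_⟩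
  · simp only [map_sub, map_mul]
    linear_combination algebraMap K[X] (RatFunc K) g' * hxg - algebraMap K[X] (RatFunc K) g * hyg
  · simp only [map_sub, map_mul, hfg ρ hρ, hfg' ρ hρ]
    ring

theorem mul (hx : HasValuesAtRoots M x v) (hy : HasValuesAtRoots M y w) :
    HasValuesAtRoots M (x * y) (fun ρ => v ρ * w ρ) := by
  obtain ⟨f, g, hg, hxg, hfg⟩ := hx
  obtain ⟨f', g', hg', hyg, hfg'⟩ := hy
  refine ⟨f * f', g * g', hg.mul_right hg', ?_, fun ρ hρ => ?_⟩
  · simp only [map_mul]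
    linear_combination (y * algebraMap K[X] (RatFunc K) g') * hxg +
      algebraMap K[X] (RatFunc K) f * hyg
  · simp only [map_mul, hfg ρ hρ, hfg' ρ hρ]
    ring

theorem pow (hx : HasValuesAtRoots M x v) (n : ℕ) :
    HasValuesAtRoots M (x ^ n) (fun ρ => v ρ ^ n) := by
  induction n with
  | zero => simpa using one
  | succ n ih => simpa only [pow_succ] using ih.mul hx

theorem inv [IsAlgClosed Ω] (hx : HasValuesAtRoots M x v) (hv : ∀ ρ, aeval ρ M = 0 → v ρ ≠ 0) :
    HasValuesAtRoots M x⁻¹ (fun ρ => (v ρ)⁻¹) := by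
  obtain ⟨f, g, hg, hxg, hfg⟩ := hx
  have hf : IsCoprime M f := by
    refine (isCoprime_iff_aeval_ne_zero_of_isAlgClosed K Ω M f).2 fun ρ => ?_
    refine or_iff_not_imp_left.2 fun hρ => ?_
    rw [not_not] at hρ
    rw [hfg ρ hρ]
    exact mul_ne_zero (hv ρ hρ) ((aeval_ne_zero_of_isCoprime hg ρ).resolve_left (not_not.2 hρ))
  rcases eq_or_ne x 0 with rfl | hx0
  · rw [zero_mul, eq_comm, map_eq_zero_iff _ (IsFractionRing.injective _ _)] at hxg
    subst hxg
    refine ⟨0, 1, isCoprime_one_right, by simp, fun ρ hρ => ?_⟩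
    exact absurd hρ ((isCoprime_zero_right.1 hf).map (aeval ρ)).ne_zero
  refine ⟨g, f, hf, by rw [← hxg, inv_mul_cancel_left₀ hx0], fun ρ hρ => ?_⟩
  rw [hfg ρ hρ, inv_mul_cancel_left₀ (hv ρ hρ)]

theorem div [IsAlgClosed Ω] (hx : HasValuesAtRoots M x v) (hy : HasValuesAtRoots M y w)
    (hw : ∀ ρ, aeval ρ M = 0 → w ρ ≠ 0) : HasValuesAtRoots M (x / y) (fun ρ => v ρ / w ρ) := by
  simpa only [div_eq_mul_inv] using hx.mul (hy.inv hw)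

theorem zpow [IsAlgClosed Ω] (hx : HasValuesAtRoots M x v) (hv : ∀ ρ, aeval ρ M = 0 → v ρ ≠ 0)
    (z : ℤ) : HasValuesAtRoots M (x ^ z) (fun ρ => v ρ ^ z) := by
  cases z with
  | ofNat n => simpa only [Int.ofNat_eq_natCast, zpow_natCast] using hx.pow n
  | negSucc n =>
    simpa only [zpow_negSucc] using (hx.pow (n + 1)).inv fun ρ hρ => pow_ne_zero _ (hv ρ hρ)

theorem sum {ι : Type*} {s : Finset ι} {x : ι → RatFunc K} {v : ι → Ω → Ω}
    (h : ∀ i ∈ s, HasValuesAtRoots M (x i) (v i)) :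
    HasValuesAtRoots M (∑ i ∈ s, x i) (fun ρ => ∑ i ∈ s, v i ρ) := by
  induction s using Finset.cons_induction with
  | empty => simpa using zero
  | cons i s hi ih =>
    simp only [sum_cons] at h ⊢
    exact (h i (mem_cons_self i s)).add (ih fun j hj => h j (mem_cons_of_mem hj))

theorem prod {ι : Type*} {s : Finset ι} {x : ι → RatFunc K} {v : ι → Ω → Ω}
    (h : ∀ i ∈ s, HasValuesAtRoots M (x i) (v i)) :
    HasValuesAtRoots M (∏ i ∈ s, x i) (fun ρ => ∏ i ∈ s, v i ρ) := by
  induction s using Finset.cons_induction with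
  | empty => simpa using one
  | cons i s hi ih =>
    simp only [prod_cons] at h ⊢
    exact (h i (mem_cons_self i s)).mul (ih fun j hj => h j (mem_cons_of_mem hj))

theorem qPoch (hx : HasValuesAtRoots M x v) (hy : HasValuesAtRoots M y w) (k : ℕ) :
    HasValuesAtRoots M (qPoch x y k) (fun ρ => qPoch (v ρ) (w ρ) k) :=
  prod fun i _ => one.sub (hx.mul (hy.pow i))

theorem qInt [IsAlgClosed Ω] (hx : HasValuesAtRoots M x v) (hv₀ : ∀ ρ, aeval ρ M = 0 → v ρ ≠ 0)
    (hv₁ : ∀ ρ, aeval ρ M = 0 → v ρ ≠ 1) (z : ℤ) :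
    HasValuesAtRoots M (qInt x z) (fun ρ => qInt (v ρ) z) :=
  (one.sub (hx.zpow hv₀ z)).div (one.sub hx) fun ρ hρ => sub_ne_zero.2 (hv₁ ρ hρ).symm

theorem wellPoisedTerm [IsAlgClosed Ω] {q a : RatFunc K} (hq : HasValuesAtRoots M q v)
    (ha : HasValuesAtRoots M a w) (hv₀ : ∀ ρ, aeval ρ M = 0 → v ρ ≠ 0)
    (hv₁ : ∀ ρ, aeval ρ M = 0 → v ρ ≠ 1) (hw₀ : ∀ ρ, aeval ρ M = 0 → w ρ ≠ 0) (d : ℕ) (t : ℤ)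
    (k : ℕ) (hden : ∀ ρ, aeval ρ M = 0 →
      _root_.qPoch (v ρ ^ (d : ℤ)) (v ρ ^ (d : ℤ)) k ^ 2 *
        _root_.qPoch (w ρ * v ρ ^ (d : ℤ)) (v ρ ^ (d : ℤ)) k *
        _root_.qPoch (v ρ ^ (d : ℤ) / w ρ) (v ρ ^ (d : ℤ)) k ≠ 0) :
    HasValuesAtRoots M (_root_.wellPoisedTerm q a d t k)
      (fun ρ => _root_.wellPoisedTerm (v ρ) (w ρ) d t k) := by
  have hqz := hq.zpow hv₀
  have hp := hqz d
  have hnum := ((((hqz t).qPoch hp k).pow 2).mul ((ha.mul (hqz t)).qPoch hp k)).mul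
    (((hqz t).div ha hw₀).qPoch hp k)
  have hdenom := (((hp.qPoch hp k).pow 2).mul ((ha.mul hp).qPoch hp k)).mul
    ((hp.div ha hw₀).qPoch hp k)
  exact (((hq.qInt hv₀ hv₁ _).mul hnum).div hdenom hden).mul (hqz _)

theorem exists_eq_mul [IsAlgClosed Ω] (hM : M.Separable) (h : HasValuesAtRoots M x v)
    (hv : ∀ ρ, aeval ρ M = 0 → v ρ = 0) :
    ∃ f g : K[X], IsCoprime M g ∧
      x * algebraMap K[X] (RatFunc K) g =
        algebraMap K[X] (RatFunc K) M * algebraMap K[X] (RatFunc K) f := by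
  obtain ⟨f, g, hg, hxg, hfg⟩ := h
  obtain ⟨f', rfl⟩ := hM.dvd_of_forall_aeval_eq_zero fun ρ hρ => by
    rw [hfg ρ hρ, hv ρ hρ, zero_mul]
  exact ⟨f', g, hg, by rw [hxg, map_mul]⟩

end HasValuesAtRoots

end ValuesAtRoots

theorem isPrimitiveRoot_of_aeval_cyclotomic_eq_zero {K Ω : Type*} [Field K] [Field Ω]
    [CharZero Ω] [Algebra K Ω] {m : ℕ} {ρ : Ω} (h : aeval ρ (cyclotomic m K) = 0) :
    IsPrimitiveRoot ρ m := by
  rcases eq_or_ne m 0 with rfl | hm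
  · simp at h
  have : NeZero (m : Ω) := ⟨Nat.cast_ne_zero.2 hm⟩
  rw [aeval_def, eval₂_eq_eval_map, map_cyclotomic] at h
  exact isRoot_cyclotomic_iff.1 h

theorem exists_sum_wellPoisedTerm_eq_cyclotomic_mul {K : Type*} [Field K] [CharZero K] {m d : ℕ}
    (hm : 1 < m) (hdm : d.Coprime m) (t : ℤ) {c : K} (hc : c ≠ 0) (hcm : c ^ m ≠ 1) :
    ∃ f g : K[X], IsCoprime (cyclotomic m K) g ∧
      (∑ k ∈ range m, wellPoisedTerm RatFunc.X (RatFunc.C c) d t k) *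
          algebraMap K[X] (RatFunc K) g =
        algebraMap K[X] (RatFunc K) (cyclotomic m K) * algebraMap K[X] (RatFunc K) f := by
  have : NeZero m := ⟨by omega⟩
  have hroot {ρ : AlgebraicClosure K} (hρ : aeval ρ (cyclotomic m K) = 0) :=
    isPrimitiveRoot_of_aeval_cyclotomic_eq_zero hρ
  have hα : algebraMap K (AlgebraicClosure K) c ≠ 0 := (_root_.map_ne_zero _).2 hc
  have hαm : algebraMap K (AlgebraicClosure K) c ^ m ≠ 1 := by
    rwa [← map_pow, map_ne_one_iff _ (algebraMap K _).injective]
  refine HasValuesAtRoots.exists_eq_mul (separable_cyclotomic m K)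
    (HasValuesAtRoots.sum fun k hk => ?_) fun ρ hρ =>
      sum_wellPoisedTerm_eq_zero (hroot hρ) hdm t hα hαm
  refine HasValuesAtRoots.X.wellPoisedTerm (HasValuesAtRoots.const c)
    (fun ρ hρ => (hroot hρ).ne_zero (NeZero.ne m)) (fun ρ hρ => (hroot hρ).ne_one hm)
    (fun _ _ => hα) d t k fun ρ hρ => ?_
  have hp : IsPrimitiveRoot (ρ ^ (d : ℤ)) m := by
    rw [zpow_natCast]
    exact (hroot hρ).pow_of_coprime d hdm
  have hk' := mem_range.1 hk
  exact mul_ne_zero (mul_ne_zero (pow_ne_zero _ (qPoch_self_ne_zero hp hk'))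
    (qPoch_ne_zero_of_pow_ne_one hp.pow_eq_one (mul_pow_ne_one_of_pow_eq_one hp.pow_eq_one hαm) k))
    (qPoch_ne_zero_of_pow_ne_one hp.pow_eq_one (div_pow_ne_one_of_pow_eq_one hp.pow_eq_one hαm) k)

theorem RatFunc.X_pow_ne_one {K : Type*} [Field K] {m : ℕ} (hm : m ≠ 0) :
    (RatFunc.X : RatFunc K) ^ m ≠ 1 := fun h =>
  RatFunc.transcendental_X (IsIntegral.isAlgebraic
    (IsIntegral.of_pow (Nat.pos_of_ne_zero hm) (h ▸ isIntegral_one)))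

theorem stmt1_general (m : ℕ) (hm : 1 < m) (d : ℕ) (t : ℤ)
    (hdm : Nat.Coprime d m) :
    let q : RatFunc (RatFunc ℚ) := RatFunc.X
    let a : RatFunc (RatFunc ℚ) := RatFunc.C RatFunc.X
    ratCongr2 (cyclotomic m (RatFunc ℚ))
      (∑ k ∈ Finset.range m,
        qInt q (2 * (d : ℤ) * k + t) *
          (qPoch (q ^ t) (q ^ (d : ℤ)) k ^ 2 * qPoch (a * q ^ t) (q ^ (d : ℤ)) k *
            qPoch (q ^ t / a) (q ^ (d : ℤ)) k) /
          (qPoch (q ^ (d : ℤ)) (q ^ (d : ℤ)) k ^ 2 * qPoch (a * q ^ (d : ℤ)) (q ^ (d : ℤ)) k *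
            qPoch (q ^ (d : ℤ) / a) (q ^ (d : ℤ)) k) *
          q ^ (((d : ℤ) - 2 * t) * k)) :=
  exists_sum_wellPoisedTerm_eq_cyclotomic_mul hm hdm t RatFunc.X_ne_zero
    (RatFunc.X_pow_ne_one (by omega))

/-- Lemma 2 of the paper: the full parametric sum vanishes modulo `Φₘ(q)`. -/
theorem stmt1 (m : ℕ) (hm : 1 < m) (d : ℕ) (hd : 2 ≤ d) (t : ℤ)
    (hdm : Nat.Coprime d m) (hdt : Int.gcd (d : ℤ) t = 1) :
    let q : RatFunc (RatFunc ℚ) := RatFunc.X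
    let a : RatFunc (RatFunc ℚ) := RatFunc.C RatFunc.X
    ratCongr2 (cyclotomic m (RatFunc ℚ))
      (∑ k ∈ Finset.range m,
        qInt q (2 * (d : ℤ) * k + t) *
          (qPoch (q ^ t) (q ^ (d : ℤ)) k ^ 2 * qPoch (a * q ^ t) (q ^ (d : ℤ)) k *
            qPoch (q ^ t / a) (q ^ (d : ℤ)) k) /
          (qPoch (q ^ (d : ℤ)) (q ^ (d : ℤ)) k ^ 2 * qPoch (a * q ^ (d : ℤ)) (q ^ (d : ℤ)) k *
            qPoch (q ^ (d : ℤ) / a) (q ^ (d : ℤ)) k) *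
          q ^ (((d : ℤ) - 2 * t) * k)) :=
  stmt1_general m hm d t hdm
end

section
/- Let d ≥ 2, m > 1, s, t be integers with gcd(d,t) = 1, 0 ≤ s ≤ m−1 and d·s ≡ −t (mod m). Then (a q^t; q^d)_s / (q^d/a; q^d)_s ≡ (−a)^s · q^{s(2t + ds − d)/2} modulo Φ_m(q), as rational functions in a and q. -/
/-!
Let `S ⊆ K(q)` be the ring of rational functions whose denominator is coprime to `Φ_m`; the
congruence says that the left side lies in `Φ_m S`. Both `q` and every factor `1 - q^{d(i+1)}/a`
of `(q^d/a; q^d)_s` are units of `S`, the latter because `a` is not a root of unity. Pairing the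
`i`-th factor of `(a q^t; q^d)_s` with the `(s-1-i)`-th factor of `(q^d/a; q^d)_s` gives
`(-a)^s q^{s(2t+ds-d)/2} (q^d/a; q^d)_s = ∏_{i<s} (q^{t+ds} - a q^{t+di})`, which differs from
`(a q^t; q^d)_s = ∏_{i<s} (1 - a q^{t+di})` by a multiple of `q^{t+ds} - 1`. As `m ∣ t + ds`,
this is a multiple of `q^m - 1`, hence of `Φ_m`.
-/

open Polynomial Finset

section CommRing

variable {R : Type*} [CommRing R]

theorem sub_dvd_prod_sub_sub_prod_sub {ι : Type*} (s : Finset ι) (b : ι → R) (x y : R) :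
    x - y ∣ ∏ i ∈ s, (x - b i) - ∏ i ∈ s, (y - b i) := by
  have h := sub_dvd_eval_sub x y (∏ i ∈ s, (X - C (b i)))
  rw [eval_prod, eval_prod] at h
  simpa only [eval_sub, eval_X, eval_C] using h

theorem prod_neg_mul_prod_one_sub_eq_prod_sub (y z r : R) (s : ℕ) :
    (∏ i ∈ range s, -(y * r ^ i)) * ∏ i ∈ range s, (1 - z * r ^ (i + 1)) =
      ∏ i ∈ range s, (y * z * r ^ s - y * r ^ i) := by
  rw [← prod_range_reflect (fun i => 1 - z * r ^ (i + 1)), ← prod_mul_distrib]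
  refine prod_congr rfl fun i hi => ?_
  have hrs : r ^ i * r ^ (s - 1 - i + 1) = r ^ s := by
    rw [← pow_add]; congr 1; have := mem_range.1 hi; omega
  linear_combination y * z * hrs

theorem sub_one_dvd_prod_one_sub_sub_prod (y z r : R) (s : ℕ) :
    y * z * r ^ s - 1 ∣ ∏ i ∈ range s, (1 - y * r ^ i) -
      (∏ i ∈ range s, -(y * r ^ i)) * ∏ i ∈ range s, (1 - z * r ^ (i + 1)) := by
  rw [prod_neg_mul_prod_one_sub_eq_prod_sub, ← neg_sub, neg_dvd]
  exact sub_dvd_prod_sub_sub_prod_sub _ _ _ _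

theorem Units.sub_one_dvd_zpow_sub_one (u : Rˣ) (k : ℤ) :
    (u : R) - 1 ∣ ((u ^ k : Rˣ) : R) - 1 := by
  cases k with
  | ofNat n => simpa using sub_one_dvd_pow_sub_one (u : R) n
  | negSucc n =>
    have h : ((u ^ Int.negSucc n : Rˣ) : R) - 1 =
        -((u ^ Int.negSucc n : Rˣ) : R) * ((u : R) ^ (n + 1) - 1) := by
      rw [zpow_negSucc, mul_sub, ← Units.val_pow_eq_pow_val, neg_mul, Units.inv_mul]; ring
    rw [h]
    exact dvd_mul_of_dvd_right (sub_one_dvd_pow_sub_one _ _) _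

theorem Units.pow_sub_one_dvd_zpow_sub_one (u : Rˣ) {m : ℕ} {k : ℤ} (h : (m : ℤ) ∣ k) :
    (u : R) ^ m - 1 ∣ ((u ^ k : Rˣ) : R) - 1 := by
  obtain ⟨j, rfl⟩ := h
  simpa [zpow_mul] using (u ^ m).sub_one_dvd_zpow_sub_one j

end CommRing

theorem SubringClass.coe_units_zpow {F S : Type*} [DivisionRing F] [SetLike S F]
    [SubringClass S F] {T : S} (u : Tˣ) (k : ℤ) : (((u ^ k : Tˣ) : T) : F) = ((u : T) : F) ^ k := by
  change ((Units.map (SubringClass.subtype T : T →* F) (u ^ k) : Fˣ) : F) = _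
  rw [map_zpow, Units.val_zpow_eq_zpow_val]
  rfl

theorem sum_range_add_mul_eq (t : ℤ) (d s : ℕ) :
    ∑ i ∈ range s, (t + d * i) = (s : ℤ) * (2 * t + d * s - d) / 2 := by
  refine (Int.ediv_eq_of_eq_mul_left two_ne_zero ?_).symm
  induction s with
  | zero => simp
  | succ s ih => rw [sum_range_succ, add_mul, ← ih]; push_cast; ring

theorem prod_range_neg_mul_zpow {F : Type*} [Field F] {q : F} (hq : q ≠ 0) (x : F) (t : ℤ)
    (d s : ℕ) : ∏ i ∈ range s, -(x * q ^ t * (q ^ d) ^ i) =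
      (-x) ^ s * q ^ ((s : ℤ) * (2 * t + d * s - d) / 2) := by
  rw [← sum_range_add_mul_eq]
  induction s with
  | zero => simp
  | succ s ih =>
    rw [prod_range_succ, ih, sum_range_succ, zpow_add₀ hq, zpow_add₀ hq, zpow_mul, zpow_natCast,
      zpow_natCast, pow_succ]
    ring

section Field

variable {K : Type*} [Field K]

theorem isCoprime_cyclotomic_of_forall_pow_eq_one {m : ℕ} {g : K[X]}
    (h : 0 < m → ∀ x : AlgebraicClosure K, x ^ m = 1 → aeval x g ≠ 0) :
    IsCoprime (cyclotomic m K) g := by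
  rcases m.eq_zero_or_pos with rfl | hm
  · rw [cyclotomic_zero]; exact isCoprime_one_left
  rw [isCoprime_iff_aeval_ne_zero_of_isAlgClosed K (AlgebraicClosure K)]
  refine fun x => or_iff_not_imp_left.2 fun hx => h hm x ?_
  obtain ⟨p, hp⟩ := cyclotomic.dvd_X_pow_sub_one m K
  have : aeval x ((X : K[X]) ^ m - 1) = 0 := by rw [hp, map_mul, not_not.1 hx, zero_mul]
  simpa [sub_eq_zero] using this

theorem isCoprime_cyclotomic_one_sub_C_mul_X_pow {c : K} (hc : ∀ n, 0 < n → c ^ n ≠ 1)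
    (m k : ℕ) : IsCoprime (cyclotomic m K) (1 - C c * X ^ k) :=
  isCoprime_cyclotomic_of_forall_pow_eq_one fun hm x hx hroot => by
    rw [map_sub, map_one, map_mul, aeval_C, map_pow, aeval_X, sub_eq_zero] at hroot
    apply hc m hm
    apply (algebraMap K (AlgebraicClosure K)).injective
    -- `c ^ m = (c * x ^ k) ^ m` because `x ^ m = 1`
    rw [map_pow, map_one, ← one_pow m, hroot, mul_pow, ← pow_mul, mul_comm k m, pow_mul, hx,
      one_pow, mul_one]

theorem one_sub_C_mul_X_pow_ne_zero {c : K} (hc : c ≠ 1) (k : ℕ) :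
    (1 : K[X]) - C c * X ^ k ≠ 0 := fun h => hc <| by
  have h1 := congrArg (eval 1) h
  rw [eval_sub, eval_one, eval_mul, eval_C, eval_pow, eval_X, one_pow, mul_one, eval_zero,
    sub_eq_zero] at h1
  exact h1.symm

theorem RatFunc.X_pow_ne_one_s16 {n : ℕ} (hn : n ≠ 0) : (RatFunc.X : RatFunc K) ^ n ≠ 1 := by
  rw [← RatFunc.algebraMap_X, ← map_pow, ← map_one (algebraMap K[X] (RatFunc K)),
    (RatFunc.algebraMap_injective K).ne_iff]
  intro h
  simpa [hn] using congrArg natDegree h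

def coprimeDenomSubalgebra (M : K[X]) : Subalgebra K[X] (RatFunc K) where
  carrier := {x | ∃ p g : K[X], IsCoprime M g ∧
    x * algebraMap K[X] (RatFunc K) g = algebraMap K[X] (RatFunc K) p}
  mul_mem' := by
    rintro x y ⟨p, g, hg, hx⟩ ⟨p', g', hg', hy⟩
    exact ⟨p * p', g * g', hg.mul_right hg', by simp only [map_mul, ← hx, ← hy]; ring⟩
  add_mem' := by
    rintro x y ⟨p, g, hg, hx⟩ ⟨p', g', hg', hy⟩
    exact ⟨p * g' + p' * g, g * g', hg.mul_right hg', by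
      simp only [map_mul, map_add, ← hx, ← hy]; ring⟩
  algebraMap_mem' p := ⟨p, 1, isCoprime_one_right, by simp⟩

namespace coprimeDenomSubalgebra

variable {M : K[X]}

theorem isUnit_algebraMap {g : K[X]} (hg : g ≠ 0) (h : IsCoprime M g) :
    IsUnit (algebraMap K[X] (coprimeDenomSubalgebra M) g) := by
  have hg' : algebraMap K[X] (RatFunc K) g ≠ 0 := RatFunc.algebraMap_ne_zero hg
  refine IsUnit.of_mul_eq_one ⟨(algebraMap K[X] (RatFunc K) g)⁻¹, 1, g, h, ?_⟩ ?_
  · rw [inv_mul_cancel₀ hg', map_one]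
  · exact Subtype.ext (mul_inv_cancel₀ hg')

theorem exists_div_sub_eq_mul {N D e : coprimeDenomSubalgebra M} (hD : IsUnit D)
    (h : algebraMap _ (coprimeDenomSubalgebra M) M ∣ N - e * D) :
    ∃ w ∈ coprimeDenomSubalgebra M,
      (N : RatFunc K) / D - e = algebraMap K[X] (RatFunc K) M * w := by
  obtain ⟨w, hw⟩ := h
  refine ⟨_, (w * ↑hD.unit⁻¹).2, ?_⟩
  have hD1 : (D : RatFunc K) * ↑(↑hD.unit⁻¹ : coprimeDenomSubalgebra M) = 1 := by
    rw [← Subalgebra.coe_mul, IsUnit.mul_val_inv, Subalgebra.coe_one]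
  have hD0 : (D : RatFunc K) ≠ 0 := left_ne_zero_of_mul_eq_one hD1
  have hw' := congrArg Subtype.val hw
  push_cast at hw' ⊢
  rw [eq_inv_of_mul_eq_one_right hD1, ← mul_assoc, ← hw']
  field_simp

theorem isUnit_algebraMap_X (m : ℕ) :
    IsUnit (algebraMap K[X] (coprimeDenomSubalgebra (cyclotomic m K)) X) :=
  isUnit_algebraMap X_ne_zero (isCoprime_cyclotomic_X m)

theorem isUnit_algebraMap_one_sub_C_mul_X_pow {c : K} (hc : ∀ n, 0 < n → c ^ n ≠ 1) (m k : ℕ) :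
    IsUnit (algebraMap K[X] (coprimeDenomSubalgebra (cyclotomic m K)) (1 - C c * X ^ k)) :=
  isUnit_algebraMap (one_sub_C_mul_X_pow_ne_zero (by simpa using hc 1 one_pos) k)
    (isCoprime_cyclotomic_one_sub_C_mul_X_pow hc m k)

theorem algebraMap_cyclotomic_dvd_zpow_sub_one {m : ℕ}
    {U : (coprimeDenomSubalgebra (cyclotomic m K))ˣ}
    (hU : (U : coprimeDenomSubalgebra (cyclotomic m K)) = algebraMap K[X] _ X) {k : ℤ}
    (hk : (m : ℤ) ∣ k) :
    algebraMap K[X] (coprimeDenomSubalgebra (cyclotomic m K)) (cyclotomic m K) ∣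
      ((U ^ k : _ˣ) : coprimeDenomSubalgebra (cyclotomic m K)) - 1 := by
  refine (_root_.map_dvd _ (cyclotomic.dvd_X_pow_sub_one m K)).trans ?_
  rw [map_sub, map_pow, map_one, ← hU]
  exact U.pow_sub_one_dvd_zpow_sub_one hk

theorem algebraMap_cyclotomic_dvd_prod_sub {c : K} (hc0 : c ≠ 0) {m : ℕ}
    {U : (coprimeDenomSubalgebra (cyclotomic m K))ˣ}
    (hU : (U : coprimeDenomSubalgebra (cyclotomic m K)) = algebraMap K[X] _ X) (d s : ℕ) {t : ℤ}
    (hmt : (m : ℤ) ∣ t + d * s) :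
    let S := coprimeDenomSubalgebra (cyclotomic m K)
    let y : S := algebraMap K[X] S (C c) * ↑(U ^ t)
    let z : S := algebraMap K[X] S (C c⁻¹)
    let r : S := algebraMap K[X] S (X ^ d)
    algebraMap K[X] S (cyclotomic m K) ∣ ∏ i ∈ range s, (1 - y * r ^ i) -
      (∏ i ∈ range s, -(y * r ^ i)) * ∏ i ∈ range s, (1 - z * r ^ (i + 1)) := by
  intro S y z r
  have hyz : y * z * r ^ s = ↑(U ^ (t + (d : ℤ) * s)) := by
    have hCz : algebraMap K[X] S (C c) * z = 1 := by
      rw [← map_mul, ← C_mul, mul_inv_cancel₀ hc0, C_1, map_one]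
    have hr : r = ↑(U ^ (d : ℤ)) := by
      rw [zpow_natCast, Units.val_pow_eq_pow_val, hU, ← map_pow]
    calc y * z * r ^ s = (algebraMap K[X] S (C c) * z) * (↑(U ^ t) * r ^ s) := by ring
      _ = _ := by
        rw [hCz, one_mul, hr, ← Units.val_pow_eq_pow_val, ← Units.val_mul, ← zpow_natCast,
          ← zpow_mul, ← zpow_add]
  exact (algebraMap_cyclotomic_dvd_zpow_sub_one hU hmt).trans
    (hyz ▸ sub_one_dvd_prod_one_sub_sub_prod y z r s)

end coprimeDenomSubalgebra

open coprimeDenomSubalgebra in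
theorem exists_qPoch_div_qPoch_sub_eq_cyclotomic_mul {c : K} (hc0 : c ≠ 0)
    (hc : ∀ n, 0 < n → c ^ n ≠ 1) (d m s : ℕ) {t : ℤ} (hmt : (m : ℤ) ∣ t + d * s) :
    let q : RatFunc K := RatFunc.X
    let a : RatFunc K := RatFunc.C c
    ∃ w ∈ coprimeDenomSubalgebra (cyclotomic m K),
      qPoch (a * q ^ t) (q ^ (d : ℤ)) s / qPoch (q ^ (d : ℤ) / a) (q ^ (d : ℤ)) s -
        (-a) ^ s * q ^ ((s : ℤ) * (2 * t + d * s - d) / 2) =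
      algebraMap K[X] (RatFunc K) (cyclotomic m K) * w := by
  intro q a
  set S := coprimeDenomSubalgebra (cyclotomic m K)
  obtain ⟨U, hU⟩ := isUnit_algebraMap_X (K := K) m
  have hD : IsUnit (∏ i ∈ range s,
      (1 - algebraMap K[X] S (C c⁻¹) * algebraMap K[X] S (X ^ d) ^ (i + 1))) := by
    refine IsUnit.prod_iff.2 fun i _ => ?_
    rw [← map_pow, ← map_mul, ← map_one (algebraMap K[X] S), ← map_sub, ← pow_mul]
    refine isUnit_algebraMap_one_sub_C_mul_X_pow (fun n hn => ?_) m _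
    rw [inv_pow, inv_ne_one]
    exact hc n hn
  obtain ⟨w, hw, h⟩ :=
    exists_div_sub_eq_mul hD (algebraMap_cyclotomic_dvd_prod_sub hc0 hU d s hmt)
  refine ⟨w, hw, Eq.trans ?_ h⟩
  set y : S := algebraMap K[X] S (C c) * ↑(U ^ t)
  set z : S := algebraMap K[X] S (C c⁻¹)
  set r : S := algebraMap K[X] S (X ^ d)
  have hy : (y : RatFunc K) = a * q ^ t := by
    simp only [y]; push_cast; rw [SubringClass.coe_units_zpow, hU]; simp [q, a]
  have hz : (z : RatFunc K) = a⁻¹ := by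
    simp only [z]; push_cast; rw [RatFunc.algebraMap_C, map_inv₀]
  have hr : (r : RatFunc K) = q ^ d := by
    simp only [r]; push_cast; rw [RatFunc.algebraMap_X]
  congr 2
  · push_cast [qPoch, hy, hr, zpow_natCast]
    rfl
  · push_cast [qPoch, hz, hr, zpow_natCast]
    exact prod_congr rfl fun i _ => by ring
  · push_cast [hy, hr]
    exact (prod_range_neg_mul_zpow RatFunc.X_ne_zero a t d s).symm

end Field

theorem stmt16_general (d : ℕ) (m : ℕ) (s : ℕ) (t : ℤ)
    (hmod : (d : ℤ) * s ≡ -t [ZMOD (m : ℤ)]) :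
    let q : RatFunc (RatFunc ℚ) := RatFunc.X
    let a : RatFunc (RatFunc ℚ) := RatFunc.C RatFunc.X
    ratCongr2 (cyclotomic m (RatFunc ℚ))
      (qPoch (a * q ^ t) (q ^ (d : ℤ)) s / qPoch (q ^ (d : ℤ) / a) (q ^ (d : ℤ)) s -
        (-a) ^ s * q ^ ((s : ℤ) * (2 * t + (d : ℤ) * s - d) / 2)) := by
  have hX : ∀ n, 0 < n → (RatFunc.X : RatFunc ℚ) ^ n ≠ 1 := fun n hn =>
    RatFunc.X_pow_ne_one_s16 hn.ne'
  have hmt : (m : ℤ) ∣ t + d * s := Int.dvd_neg.1 (by convert hmod.dvd using 1; ring)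
  obtain ⟨w, ⟨p, g, hg, hwg⟩, hw⟩ :=
    exists_qPoch_div_qPoch_sub_eq_cyclotomic_mul RatFunc.X_ne_zero hX d m s hmt
  exact ⟨p, g, hg, by rw [hw, mul_assoc, hwg]⟩

/-- The key congruence in the proof of Lemma 1:
`(aq^t;q^d)_s / (q^d/a;q^d)_s ≡ (-a)^s q^{s(2t+ds-d)/2}` modulo `Φₘ(q)`. -/
theorem stmt16 (d : ℕ) (hd : 2 ≤ d) (m : ℕ) (hm : 1 < m) (s : ℕ) (t : ℤ)
    (hdt : Int.gcd (d : ℤ) t = 1) (hs : s ≤ m - 1)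
    (hmod : (d : ℤ) * s ≡ -t [ZMOD (m : ℤ)]) :
    let q : RatFunc (RatFunc ℚ) := RatFunc.X
    let a : RatFunc (RatFunc ℚ) := RatFunc.C RatFunc.X
    ratCongr2 (cyclotomic m (RatFunc ℚ))
      (qPoch (a * q ^ t) (q ^ (d : ℤ)) s / qPoch (q ^ (d : ℤ) / a) (q ^ (d : ℤ)) s -
        (-a) ^ s * q ^ ((s : ℤ) * (2 * t + (d : ℤ) * s - d) / 2)) :=
  stmt16_general d m s t hmod
end
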